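/- arXiv:1810.08263 — 6 statements merged into one kernel-verified Lean document; each statement's English description precedes it below -/
import Mathlib

section
/- For any two distinct injective functions f, g from {1,...,n} to {1,...,n+1} that differ in exactly one coordinate, the unique permutation extensions of f and g to {1,...,n+1} have opposite parity (sign). -/
/-!
If `f` and `g` differ only at `i₀`, the permutation `πg⁻¹ * πf` fixes every point except
`i₀.castSucc` and `last n`, and moves `i₀.castSucc`. A permutation supported on two points that is
not the identity is their transposition, so `πf = πg * swap` and the signs are opposite.
-/

namespace Equiv.Perm

theorem inv_mul_apply_eq_self_iff {α : Type*} (π π' : Perm α) (x : α) :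
    (π'⁻¹ * π) x = x ↔ π x = π' x := by
  rw [mul_apply, inv_eq_iff_eq]

theorem sign_eq_neg_one_of_support_subset_pair {α : Type*} [Fintype α] [DecidableEq α]
    {σ : Perm α} {a b : α}
    (hsupp : σ.support ⊆ {a, b}) (ha : σ a ≠ a) : sign σ = -1 := by
  have hσ : σ ≠ 1 := fun h => ha (by simp [h])
  have hcard : σ.support.card = 2 :=
    le_antisymm ((Finset.card_le_card hsupp).trans (Finset.card_le_two))
      (two_le_card_support_of_ne_one hσ)
  exact (card_support_eq_two.mp hcard).sign_eq

end Equiv.Perm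

theorem opposite_parity_of_differ_one_general (n : ℕ) (f g : Fin n → Fin (n + 1))
    (πf πg : Equiv.Perm (Fin (n + 1)))
    (hπf : ∀ i : Fin n, πf i.castSucc = f i)
    (hπg : ∀ i : Fin n, πg i.castSucc = g i)
    (hdiff : ∃! i : Fin n, f i ≠ g i) :
    Equiv.Perm.sign πf = -Equiv.Perm.sign πg := by
  obtain ⟨i₀, hi₀, huniq⟩ := hdiff
  have hsupp : (πg⁻¹ * πf).support ⊆ {i₀.castSucc, Fin.last n} := by
    intro x hx
    rw [Equiv.Perm.mem_support, Ne, Equiv.Perm.inv_mul_apply_eq_self_iff] at hx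
    induction x using Fin.lastCases with
    | last => simp
    | cast j =>
      rw [hπf, hπg] at hx
      simp [huniq j hx]
  have hmoves : (πg⁻¹ * πf) i₀.castSucc ≠ i₀.castSucc := by
    rwa [Ne, Equiv.Perm.inv_mul_apply_eq_self_iff, hπf, hπg]
  calc Equiv.Perm.sign πf = Equiv.Perm.sign (πg * (πg⁻¹ * πf)) := by rw [mul_inv_cancel_left]
    _ = -Equiv.Perm.sign πg := by
      rw [Equiv.Perm.sign_mul,
        Equiv.Perm.sign_eq_neg_one_of_support_subset_pair hsupp hmoves, mul_neg_one]

/-- If two injective functions `f, g : {1,...,n} → {1,...,n+1}` differ in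
exactly one coordinate, then their unique permutation extensions have opposite
parity (sign). -/
theorem opposite_parity_of_differ_one (n : ℕ) (f g : Fin n → Fin (n + 1))
    (hf : Function.Injective f) (hg : Function.Injective g)
    (πf πg : Equiv.Perm (Fin (n + 1)))
    (hπf : ∀ i : Fin n, πf i.castSucc = f i)
    (hπg : ∀ i : Fin n, πg i.castSucc = g i)
    (hdiff : ∃! i : Fin n, f i ≠ g i) :
    Equiv.Perm.sign πf = -Equiv.Perm.sign πg :=
  opposite_parity_of_differ_one_general n f g πf πg hπf hπg hdiff
end

section
/- If m is odd, m ≥ 5, and c = (m+1)/2 (the inverse of 2 mod m), then for all distinct a, b ∈ Z/m, c(a+b) is distinct from both a and b; consequently the set {(a, b, c(a+b) mod m) : a ≠ b} is an independent set of size m(m-1) in the arrangement graph A_{m,3}. -/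
/-!
Since `2c = 1`, multiplying `c(a + b) = a` by `2` gives `b = a`. Multiplication by the unit `c`
is injective, so `(a, b) ↦ c(a + b)` is injective in each argument separately. Hence two triples
`(a, b, c(a + b))` that agree in two coordinates agree in the third, and no two of them differ in
exactly one coordinate; the triples are indexed injectively by the `m(m - 1)` pairs `a ≠ b`.
-/

open Finset

section Graph

variable {α : Type*}

/-- Adjacency in the arrangement graph on triples. -/
def DifferInExactlyOne (t s : α × α × α) : Prop :=
  (t.1 ≠ s.1 ∧ t.2.1 = s.2.1 ∧ t.2.2 = s.2.2) ∨
    (t.1 = s.1 ∧ t.2.1 ≠ s.2.1 ∧ t.2.2 = s.2.2) ∨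
    (t.1 = s.1 ∧ t.2.1 = s.2.1 ∧ t.2.2 ≠ s.2.2)

theorem not_differInExactlyOne_graph {f : α → α → α}
    (hf₁ : ∀ a a' b, f a b = f a' b → a = a') (hf₂ : ∀ a b b', f a b = f a b' → b = b')
    (a b a' b' : α) : ¬DifferInExactlyOne (a, b, f a b) (a', b', f a' b') := by
  rintro (⟨ha, rfl, hf⟩ | ⟨rfl, hb, hf⟩ | ⟨rfl, rfl, hf⟩)
  · exact ha (hf₁ _ _ _ hf)
  · exact hb (hf₂ _ _ _ hf)
  · exact hf rfl

theorem card_image_offDiag_graph [Fintype α] [DecidableEq α] (f : α → α → α) :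
    ((univ.filter fun p : α × α => p.1 ≠ p.2).image fun p => (p.1, p.2, f p.1 p.2)).card =
      Fintype.card α * (Fintype.card α - 1) := by
  have hinj : Function.Injective fun p : α × α => (p.1, p.2, f p.1 p.2) :=
    fun _ _ h => Prod.ext (congrArg (·.1) h) (congrArg (·.2.1) h)
  have hoff : (univ.filter fun p : α × α => p.1 ≠ p.2) = (univ : Finset α).offDiag := by
    ext
    simp
  rw [card_image_of_injective _ hinj, hoff, offDiag_card, card_univ, Nat.mul_sub_one]

end Graph

section Halving

variable {R : Type*} [CommRing R] {c : R}

theorem mul_add_ne_left_of_two_mul_eq_one (hc : 2 * c = 1) {a b : R} (hab : a ≠ b) :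
    c * (a + b) ≠ a := by
  intro h
  apply hab
  have h2 : 2 * c * (a + b) = 2 * a := by rw [mul_assoc, h]
  rw [hc, one_mul] at h2
  linear_combination -h2

theorem mul_add_ne_right_of_two_mul_eq_one (hc : 2 * c = 1) {a b : R} (hab : a ≠ b) :
    c * (a + b) ≠ b := by
  rw [add_comm]
  exact mul_add_ne_left_of_two_mul_eq_one hc hab.symm

end Halving

theorem ZMod.two_mul_natCast_succ_div_two {m : ℕ} (hm : Odd m) :
    (2 : ZMod m) * (((m + 1) / 2 : ℕ) : ZMod m) = 1 := by
  have hdiv : 2 * ((m + 1) / 2) = m + 1 := Nat.two_mul_div_two_of_even hm.add_one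
  exact_mod_cast (congrArg (Nat.cast : ℕ → ZMod m) hdiv).trans (by simp)

theorem halving_independent_set_general (m : ℕ) [NeZero m] (hm : Odd m) :
    let c : ZMod m := (((m + 1) / 2 : ℕ) : ZMod m)
    let S : Finset (ZMod m × ZMod m × ZMod m) :=
      (Finset.univ.filter fun p : ZMod m × ZMod m => p.1 ≠ p.2).image
        fun p => (p.1, p.2, c * (p.1 + p.2))
    (∀ a b : ZMod m, a ≠ b → c * (a + b) ≠ a ∧ c * (a + b) ≠ b) ∧
    S.card = m * (m - 1) ∧
    ∀ t ∈ S, ∀ s ∈ S, t ≠ s →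
      ¬((t.1 ≠ s.1 ∧ t.2.1 = s.2.1 ∧ t.2.2 = s.2.2) ∨
        (t.1 = s.1 ∧ t.2.1 ≠ s.2.1 ∧ t.2.2 = s.2.2) ∨
        (t.1 = s.1 ∧ t.2.1 = s.2.1 ∧ t.2.2 ≠ s.2.2)) := by
  intro c S
  have hc : 2 * c = 1 := ZMod.two_mul_natCast_succ_div_two hm
  have hcu : IsUnit c := IsUnit.of_mul_eq_one_right 2 hc
  refine ⟨fun a b hab => ⟨mul_add_ne_left_of_two_mul_eq_one hc hab,
      mul_add_ne_right_of_two_mul_eq_one hc hab⟩, ?_, ?_⟩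
  · exact (card_image_offDiag_graph fun a b => c * (a + b)).trans (by rw [ZMod.card])
  · rintro _ ht _ hs -
    obtain ⟨⟨a, b⟩, -, rfl⟩ := mem_image.1 ht
    obtain ⟨⟨a', b'⟩, -, rfl⟩ := mem_image.1 hs
    exact not_differInExactlyOne_graph (f := fun a b => c * (a + b))
      (fun _ _ _ h => add_right_cancel (hcu.mul_left_cancel h))
      (fun _ _ _ h => add_left_cancel (hcu.mul_left_cancel h)) a b a' b'

/-- For odd `m ≥ 5` and `c = (m+1)/2` (the inverse of `2` mod `m`): for all
distinct `a, b ∈ ℤ/m`, `c(a+b)` is distinct from both `a` and `b`;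
consequently `{(a, b, c(a+b)) : a ≠ b}` is a set of `m(m-1)` triples of
pairwise distinct elements of `ℤ/m` that is an independent set in the
arrangement graph `A_{m,3}` (no two distinct triples differ in exactly one
coordinate). -/
theorem halving_independent_set (m : ℕ) [NeZero m] (hm : Odd m) (hm5 : 5 ≤ m) :
    let c : ZMod m := (((m + 1) / 2 : ℕ) : ZMod m)
    let S : Finset (ZMod m × ZMod m × ZMod m) :=
      (Finset.univ.filter fun p : ZMod m × ZMod m => p.1 ≠ p.2).image
        fun p => (p.1, p.2, c * (p.1 + p.2))
    (∀ a b : ZMod m, a ≠ b → c * (a + b) ≠ a ∧ c * (a + b) ≠ b) ∧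
    S.card = m * (m - 1) ∧
    ∀ t ∈ S, ∀ s ∈ S, t ≠ s →
      ¬((t.1 ≠ s.1 ∧ t.2.1 = s.2.1 ∧ t.2.2 = s.2.2) ∨
        (t.1 = s.1 ∧ t.2.1 ≠ s.2.1 ∧ t.2.2 = s.2.2) ∨
        (t.1 = s.1 ∧ t.2.1 = s.2.1 ∧ t.2.2 ≠ s.2.2)) :=
  halving_independent_set_general m hm
end

section
/- If there exists an independent set of size (n+k)!/(k+1)! in the arrangement graph A_{n+k,n} with n ≥ 2, then there exists an independent set of size (n-1+k)!/(k+1)! in A_{n-1+k,n-1}. -/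
/-- The arrangement graph `A_{m,n}`: vertices are injective functions
`{1..n} → {1..m}`, adjacent iff they differ in exactly one position. -/
def arrangementGraph (m n : ℕ) :
    SimpleGraph {f : Fin n → Fin m // Function.Injective f} where
  Adj f g := ∃! i : Fin n, f.1 i ≠ g.1 i
  symm := by
    constructor
    rintro f g ⟨i, hi, hu⟩
    exact ⟨i, fun h => hi h.symm, fun j hj => hu j fun h => hj h.symm⟩
  loopless := by
    constructor
    rintro f ⟨i, hi, -⟩
    exact hi rfl

/-- A set of vertices is independent if no two of its members are adjacent. -/
def IsIndep {V : Type*} (G : SimpleGraph V) (S : Set V) : Prop :=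
  ∀ a ∈ S, ∀ b ∈ S, ¬ G.Adj a b

/-!
Restricting an independent set of `A_{m,n}` to any `n - 1` positions is injective, since two
members that agree off one position would be adjacent. Members of the fiber
`X_v = {x ∈ X | x (last) = v}` already agree at the last position, so they are determined by
their first `n - 2` entries, all different from `v`: hence `|X_v| ≤ (m-1)(m-2)⋯(m-n+2)`.
The `m` fibers partition `X`, and `m!/(k+1)! = m · (m-1)⋯(m-n+2)` is exactly the sum of these
bounds, so every fiber attains its bound. Deleting the last coordinate of a fiber yields an
independent set of `A_{m-1,n-1}` of the same size, because re-appending `v` (after relabelling the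
other values) is a graph homomorphism.
-/

open Finset Function

lemma IsIndep.preimage {V W : Type*} {G : SimpleGraph V} {H : SimpleGraph W} (f : G →g H)
    {S : Set W} (hS : IsIndep H S) : IsIndep G (f ⁻¹' S) :=
  fun _ ha _ hb hab => hS _ ha _ hb (f.map_adj hab)

lemma Nat.descFactorial_succ_eq_mul_pred (m p : ℕ) :
    m.descFactorial (p + 1) = m * (m - 1).descFactorial p := by
  cases m with
  | zero => simp
  | succ m => exact Nat.succ_descFactorial_succ m p

section Arrangement

variable {m n : ℕ}

lemma IsIndep.eq_of_forall_ne_eq {S : Set {f : Fin n → Fin m // Injective f}}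
    (hS : IsIndep (arrangementGraph m n) S) {x y : {f : Fin n → Fin m // Injective f}}
    (hx : x ∈ S) (hy : y ∈ S) (i : Fin n) (h : ∀ j ≠ i, x.1 j = y.1 j) : x = y := by
  by_contra hne
  refine hS x hx y hy ⟨i, fun hi => hne (Subtype.ext (funext fun j => ?_)), fun j hj => ?_⟩
  · by_cases hji : j = i
    · rw [hji, hi]
    · exact h j hji
  · by_contra hji
    exact hj (h j hji)

lemma card_filter_apply_last_le {p : ℕ} {X : Finset {f : Fin (p + 2) → Fin m // Injective f}}
    (hX : IsIndep (arrangementGraph m (p + 2)) X) (v : Fin m) :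
    #{x ∈ X | x.1 (Fin.last (p + 1)) = v} ≤ (m - 1).descFactorial p := by
  let restrict (x : {x // x ∈ X.filter (·.1 (Fin.last (p + 1)) = v)}) :
      Fin p ↪ {w : Fin m // w ≠ v} :=
    ⟨fun j => ⟨x.1.1 j.castSucc.castSucc, fun h => (Fin.castSucc_lt_last _).ne
        (x.1.2 (h.trans (mem_filter.1 x.2).2.symm))⟩,
      fun i j h => Fin.castSucc_injective _
        (Fin.castSucc_injective _ (x.1.2 (congrArg Subtype.val h)))⟩
  have hinj : Injective restrict := by
    rintro ⟨x, hx⟩ ⟨y, hy⟩ h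
    rw [mem_filter] at hx hy
    refine Subtype.ext (hX.eq_of_forall_ne_eq hx.1 hy.1 (Fin.last p).castSucc fun j hj => ?_)
    induction j using Fin.lastCases with
    | last => rw [hx.2, hy.2]
    | cast j =>
      induction j using Fin.lastCases with
      | last => exact absurd rfl hj
      | cast j => exact congrArg Subtype.val (DFunLike.congr_fun h j)
  have := Fintype.card_le_of_injective restrict hinj
  rwa [Fintype.card_coe, Fintype.card_embedding_eq, Fintype.card_fin, Fintype.card_subtype_compl,
    Fintype.card_fin, Fintype.card_unique] at this

lemma card_filter_apply_last_eq {p : ℕ} {X : Finset {f : Fin (p + 2) → Fin m // Injective f}}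
    (hX : IsIndep (arrangementGraph m (p + 2)) X) (hcard : #X = m.descFactorial (p + 1))
    (v : Fin m) : #{x ∈ X | x.1 (Fin.last (p + 1)) = v} = (m - 1).descFactorial p := by
  have hsum : ∑ w, #{x ∈ X | x.1 (Fin.last (p + 1)) = w} =
      ∑ _ : Fin m, (m - 1).descFactorial p := by
    rw [← card_eq_sum_card_fiberwise (fun _ _ => mem_coe.2 (mem_univ _)), hcard,
      Nat.descFactorial_succ_eq_mul_pred, sum_const, card_univ, Fintype.card_fin, smul_eq_mul]
  exact (sum_eq_sum_iff_of_le fun w _ => card_filter_apply_last_le hX w).1 hsum v (mem_univ v)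

variable {M : ℕ}

def snocHom (e : Fin M ↪ Fin m) (v : Fin m) (hv : v ∉ Set.range e) :
    arrangementGraph M n →g arrangementGraph m (n + 1) where
  toFun y := ⟨Fin.snoc (e ∘ y.1) v, Fin.snoc_injective_of_injective (e.injective.comp y.2)
    fun h => hv (Set.range_comp_subset_range _ _ h)⟩
  map_rel' := by
    rintro y y' ⟨i, hi, hu⟩
    refine ⟨i.castSucc, by simpa using hi, fun j hj => ?_⟩
    induction j using Fin.lastCases with
    | last => simp at hj
    | cast j => exact congrArg _ (hu j (by simpa using hj))

lemma snocHom_injective (e : Fin M ↪ Fin m) (v : Fin m) (hv : v ∉ Set.range e) :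
    Injective (snocHom (n := n) e v hv) := fun y y' h =>
  Subtype.ext (funext fun j => e.injective (by
    simpa [snocHom] using congrFun (congrArg Subtype.val h) j.castSucc))

lemma range_snocHom (e : Fin M ↪ Fin m) (v : Fin m) (hv : v ∉ Set.range e)
    (he : {v}ᶜ ⊆ Set.range e) :
    Set.range (snocHom (n := n) e v hv) = {x | x.1 (Fin.last n) = v} := by
  ext x
  constructor
  · rintro ⟨y, rfl⟩
    simp [snocHom]
  · intro hx
    have hne (j : Fin n) : x.1 j.castSucc ≠ v := fun h =>
      (Fin.castSucc_lt_last j).ne (x.2 (h.trans hx.symm))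
    choose u hu using fun j => he (hne j)
    refine ⟨⟨u, fun i j h => Fin.castSucc_injective _ (x.2 ?_)⟩,
      Subtype.ext (funext fun j => ?_)⟩
    · rw [← hu i, ← hu j, h]
    · induction j using Fin.lastCases with
      | last => simpa [snocHom] using hx.symm
      | cast j => simpa [snocHom] using hu j

lemma exists_indep_card_eq_card_filter_apply_last (e : Fin M ↪ Fin m) (v : Fin m)
    (he : Set.range e = {v}ᶜ) {X : Finset {f : Fin (n + 1) → Fin m // Injective f}}
    (hX : IsIndep (arrangementGraph m (n + 1)) X) :
    ∃ Y : Finset {f : Fin n → Fin M // Injective f},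
      IsIndep (arrangementGraph M n) Y ∧ #Y = #{x ∈ X | x.1 (Fin.last n) = v} := by
  classical
  have hv : v ∉ Set.range e := by simp [he]
  let f := snocHom (n := n) e v hv
  refine ⟨X.preimage f (snocHom_injective e v hv).injOn, by simpa using hX.preimage f, ?_⟩
  simp only [card_preimage, f, range_snocHom e v hv he.superset, Set.mem_ofPred_eq]

end Arrangement

/-- If there is a perfect independent set (one of size `(n+k)!/(k+1)!`) in
`A_{n+k,n}` with `n ≥ 2`, then there is one of size `(n-1+k)!/(k+1)!` in
`A_{n-1+k,n-1}`. -/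
theorem perfect_indep_downward (n k : ℕ) (hn : 2 ≤ n)
    (X : Finset {f : Fin n → Fin (n + k) // Function.Injective f})
    (hX : IsIndep (arrangementGraph (n + k) n) ↑X)
    (hcard : X.card = (n + k).factorial / (k + 1).factorial) :
    ∃ Y : Finset {f : Fin (n - 1) → Fin (n - 1 + k) // Function.Injective f},
      IsIndep (arrangementGraph (n - 1 + k) (n - 1)) ↑Y ∧
      Y.card = (n - 1 + k).factorial / (k + 1).factorial := by
  obtain ⟨p, rfl⟩ : ∃ p, n = p + 2 := ⟨n - 2, by omega⟩
  have hle : p + 2 - 1 + k ≤ p + 2 + k := by omega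
  let v : Fin (p + 2 + k) := ⟨p + 2 - 1 + k, by omega⟩
  have he : Set.range (Fin.castLEEmb hle) = {v}ᶜ := by
    ext w
    simp only [Fin.coe_castLEEmb, Fin.range_castLE, Set.mem_ofPred_eq, Set.mem_compl_iff,
      Set.mem_singleton_iff, Fin.ext_iff, v]
    omega
  obtain ⟨Y, hY, hYcard⟩ := exists_indep_card_eq_card_filter_apply_last _ v he hX
  refine ⟨Y, hY, ?_⟩
  rw [hYcard, card_filter_apply_last_eq hX ?_ v, Nat.descFactorial_eq_div (by omega)]
  · congr 2 <;> omega
  · rw [hcard, Nat.descFactorial_eq_div (by omega)]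
    congr 2; omega
end

section
/- For n even, the number of injective n-tuples from {1,...,n+2} whose two missing values have different parities and whose associated full permutation (with missing values ordered even-then-odd) is even, equals (1/2)·n!·((n+2)/2)^2, and the ratio of this count to (n+2)!/2 equals 1/4 + 1/(4(n+1)). -/
/-!
Appending the missing values even-then-odd is forced by the parities, so an assignment is the same
thing as a permutation `π` of `Fin (n + 2)` with `π n` even, `π (n + 1)` odd and `sign π = 1`.
Right multiplication by the transposition `(0 1)` keeps `π n` and `π (n + 1)` (here `2 ≤ n`) and
flips the sign, so these are exactly half of the permutations with `π n` even and `π (n + 1)` odd.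
Those are counted by choosing the two values, `(n + 2) / 2` ways each, and permuting the other `n`
points freely.
-/

open Equiv Finset Nat

namespace Equiv.Perm

variable {α : Type*}

theorem apply_eq_or_apply_eq_of_eqOn_compl_pair {σ τ : Perm α} {a b : α}
    (h : ∀ z, z ≠ a → z ≠ b → σ z = τ z) : σ a = τ a ∨ σ a = τ b := by
  by_contra! hne
  have hza : τ.symm (σ a) ≠ a := fun hz => hne.1 (τ.symm_apply_eq.1 hz)
  have hzb : τ.symm (σ a) ≠ b := fun hz => hne.2 (τ.symm_apply_eq.1 hz)
  have := h _ hza hzb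
  rw [apply_symm_apply] at this
  exact hza (σ.injective this)

theorem eq_of_eqOn_compl_pair {σ τ : Perm α} {a b : α} (h : ∀ z, z ≠ a → z ≠ b → σ z = τ z)
    (p : α → Prop) (hσa : p (σ a)) (hτa : p (τ a)) (hσb : ¬p (σ b)) (hτb : ¬p (τ b)) :
    σ = τ := by
  have ha : σ a = τ a :=
    (apply_eq_or_apply_eq_of_eqOn_compl_pair h).resolve_right fun h => hτb (h ▸ hσa)
  have hb : σ b = τ b :=
    (apply_eq_or_apply_eq_of_eqOn_compl_pair fun z hb ha => h z ha hb).resolve_right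
      fun h => hσb (h ▸ hτa)
  ext z
  by_cases hza : z = a
  · rw [hza, ha]
  by_cases hzb : z = b
  · rw [hzb, hb]
  exact h z hza hzb

variable [Fintype α] [DecidableEq α]

theorem card_apply_eq_apply_eq {a b x y : α} (hab : a ≠ b) (hxy : x ≠ y) :
    #{σ : Perm α | σ a = x ∧ σ b = y} = (Fintype.card α - 2)! := by
  obtain ⟨ρ, hρ⟩ := exists_extending_pair ![a, b] ![x, y]
    (injective_pair_iff_ne.2 hab) (injective_pair_iff_ne.2 hxy)
  have hρa : ρ a = x := hρ 0
  have hρb : ρ b = y := hρ 1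
  have translate : {σ : Perm α // σ a = x ∧ σ b = y} ≃ {σ : Perm α // σ a = a ∧ σ b = b} :=
    subtypeEquiv (Equiv.mulLeft ρ⁻¹) fun σ => by
      simp only [coe_mulLeft, mul_apply, Perm.inv_eq_iff_eq, hρa, hρb]
  have restrict : {σ : Perm α // σ a = a ∧ σ b = b} ≃ Perm {z // z ∉ ({a, b} : Finset α)} :=
    ((Perm.subtypeEquivSubtypePerm _).trans (subtypeEquivRight fun σ => by
      simp only [mem_insert, mem_singleton, not_not, or_imp, forall_and, forall_eq])).symm
  rw [← Fintype.card_subtype, Fintype.card_congr (translate.trans restrict), Fintype.card_perm,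
    Fintype.card_subtype_compl, Fintype.card_coe, card_pair hab]

theorem card_apply_apply_of_disjoint {a b : α} (hab : a ≠ b) (p q : α → Prop) [DecidablePred p]
    [DecidablePred q] (hpq : ∀ x, p x → ¬q x) :
    #{σ : Perm α | p (σ a) ∧ q (σ b)} = #{x | p x} * #{x | q x} * (Fintype.card α - 2)! := by
  rw [card_eq_sum_card_fiberwise (f := fun σ : Perm α => (σ a, σ b))
    (t := ({x | p x} : Finset α) ×ˢ ({x | q x} : Finset α)) fun σ hσ => by simpa using hσ]
  have fiber : ∀ xy ∈ ({x | p x} : Finset α) ×ˢ ({x | q x} : Finset α),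
      #{σ ∈ ({σ : Perm α | p (σ a) ∧ q (σ b)} : Finset _) | (σ a, σ b) = xy}
        = (Fintype.card α - 2)! := by
    rintro ⟨x, y⟩ hxy
    simp only [mem_product, mem_filter, mem_univ, true_and] at hxy
    rw [filter_filter, ← card_apply_eq_apply_eq hab fun h : x = y => hpq x hxy.1 (h ▸ hxy.2)]
    congr 1
    refine filter_congr fun σ _ => ?_
    simp only [Prod.mk.injEq]
    constructor
    · exact And.right
    · rintro ⟨rfl, rfl⟩; exact ⟨hxy, rfl, rfl⟩
  rw [sum_congr rfl fiber, sum_const, card_product, smul_eq_mul]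

theorem two_mul_card_filter_sign_eq_one {P : Perm α → Prop} [DecidablePred P] {x y : α}
    (hxy : x ≠ y) (hP : ∀ σ, P (σ * swap x y) ↔ P σ) :
    2 * #{σ | P σ ∧ sign σ = 1} = #{σ | P σ} := by
  have hsign : ∀ σ : Perm α, sign (σ * swap x y) = -sign σ := fun σ => by
    rw [sign_mul, sign_swap hxy, mul_neg_one]
  have odd_eq_even : #{σ | P σ ∧ sign σ ≠ 1} = #{σ | P σ ∧ sign σ = 1} := by
    refine card_nbij' (· * swap x y) (· * swap x y) ?_ ?_ (fun σ _ => mul_swap_mul_self x y σ)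
      (fun σ _ => mul_swap_mul_self x y σ)
    all_goals
      intro σ
      simp only [coe_filter, Set.mem_ofPred_eq, mem_univ, true_and, hP, hsign]
      rcases Int.units_eq_one_or (sign σ) with h | h <;> simp [h]
  rw [two_mul]
  nth_rewrite 2 [← odd_eq_even]
  rw [← filter_filter, ← filter_filter, card_filter_add_card_filter_not]

end Equiv.Perm

theorem Fin.card_filter_odd_val (N : ℕ) : #{x : Fin N | Odd (x : ℕ)} = N / 2 := by
  rw [card_filter, Fin.sum_univ_eq_sum_range (fun i => if Odd i then 1 else 0), ← card_filter,
    ← Nat.card_multiples N 2]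
  congr 1
  exact filter_congr fun e _ => by simp [← even_iff_two_dvd, Nat.even_add_one]

theorem Fin.card_filter_even_val {N : ℕ} (hN : Even N) :
    #{x : Fin N | Even (x : ℕ)} = N / 2 := by
  have h := card_filter_add_card_filter_not (s := (univ : Finset (Fin N))) (fun x => Even (x : ℕ))
  simp only [Nat.not_even_iff_odd, Fin.card_filter_odd_val, Finset.card_fin] at h
  obtain ⟨k, rfl⟩ := hN
  omega

theorem div_half_factorial_eq_of_two_mul_eq {n c : ℕ} (hn : Even n)
    (h : 2 * c = n ! * ((n + 2) / 2) ^ 2) :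
    (c : ℚ) / ((n + 2)! / 2) = 1 / 4 + 1 / (4 * (n + 1)) := by
  obtain ⟨m, rfl⟩ := hn
  rw [show (m + m + 2) / 2 = m + 1 by omega] at h
  have hc : (2 * c : ℚ) = (m + m)! * (m + 1) ^ 2 := by exact_mod_cast h
  rw [Nat.factorial_succ, Nat.factorial_succ]
  push_cast
  have : ((m + m)! : ℚ) ≠ 0 := by positivity
  field_simp
  linear_combination 4 * hc

theorem Fin.card_extendable_injective_eq_card_perm {n : ℕ} (p q : Fin (n + 2) → Prop)
    (Q : Perm (Fin (n + 2)) → Prop) [DecidablePred p] [DecidablePred q] [DecidablePred Q]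
    (hpq : ∀ x, p x → ¬q x) :
    Nat.card {f : Fin n → Fin (n + 2) // Function.Injective f ∧
      ∃ π : Perm (Fin (n + 2)), (∀ i : Fin n, π (Fin.castAdd 2 i) = f i) ∧
        p (π (Fin.last n).castSucc) ∧ q (π (Fin.last (n + 1))) ∧ Q π} =
      #{π : Perm (Fin (n + 2)) | p (π (Fin.last n).castSucc) ∧ q (π (Fin.last (n + 1))) ∧ Q π} := by
  rw [← Fintype.card_subtype, ← Nat.card_eq_fintype_card]
  refine (Nat.card_eq_of_bijective (fun π => ⟨π.1 ∘ Fin.castAdd 2,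
    π.1.injective.comp (Fin.castAdd_injective _ _), π.1, fun _ => rfl, π.2⟩) ⟨?_, ?_⟩).symm
  · intro π τ h
    refine Subtype.ext (Perm.eq_of_eqOn_compl_pair (fun z hza hzb => ?_) p π.2.1 τ.2.1
      (fun hp => hpq _ hp π.2.2.1) (fun hp => hpq _ hp τ.2.2.1))
    have hz : (z : ℕ) < n := by
      have hzn : (z : ℕ) ≠ n := fun h => hza (Fin.ext h)
      have hzn1 : (z : ℕ) ≠ n + 1 := fun h => hzb (Fin.ext h)
      omega
    exact congrFun (congrArg Subtype.val h) ⟨z, hz⟩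
  · rintro ⟨f, -, π, hπ, hπ'⟩
    exact ⟨⟨π, hπ'⟩, Subtype.ext (funext hπ)⟩

/-- For `n` even and positive: the number of injective `n`-tuples from
`{1,...,n+2}` whose two missing values have different parities and whose
associated full permutation (missing values appended even-then-odd) is even
equals `(1/2)·n!·((n+2)/2)²`, and the ratio of this count to `(n+2)!/2`
equals `1/4 + 1/(4(n+1))`. -/
theorem double_parity_count (n : ℕ) (hn : Even n) (hpos : 0 < n) :
    let count : ℕ := Nat.card {f : Fin n → Fin (n + 2) //
      Function.Injective f ∧
      ∃ π : Equiv.Perm (Fin (n + 2)),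
        (∀ i : Fin n, π (Fin.castLE (by omega) i) = f i) ∧
        Even (π ⟨n, by omega⟩).val ∧ Odd (π ⟨n + 1, by omega⟩).val ∧
        Equiv.Perm.sign π = 1}
    2 * count = n.factorial * ((n + 2) / 2) ^ 2 ∧
    (count : ℚ) / (((n + 2).factorial : ℚ) / 2) =
      1 / 4 + 1 / (4 * (n + 1)) := by
  intro count
  have hn2 : 2 ≤ n := by
    obtain ⟨k, rfl⟩ := hn
    omega
  have halve := Perm.two_mul_card_filter_sign_eq_one (P := fun π : Perm (Fin (n + 2)) =>
      Even (π (Fin.last n).castSucc : ℕ) ∧ Odd (π (Fin.last (n + 1)) : ℕ)) (x := 0) (y := 1)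
    (by simp) fun π => by
      rw [Perm.mul_apply, Perm.mul_apply, swap_apply_of_ne_of_ne, swap_apply_of_ne_of_ne] <;>
        simp [Fin.ext_iff] <;> omega
  have hcount : 2 * count = n ! * ((n + 2) / 2) ^ 2 := by
    have hext : count = _ := Fin.card_extendable_injective_eq_card_perm (fun x => Even (x : ℕ))
      (fun x => Odd (x : ℕ)) (fun π => Perm.sign π = 1) fun x => Nat.not_odd_iff_even.2
    simp only [hext, ← and_assoc]
    rw [halve, Perm.card_apply_apply_of_disjoint (by simp [Fin.ext_iff]) _ _
      fun x => Nat.not_odd_iff_even.2, Fin.card_filter_even_val (hn.add even_two),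
      Fin.card_filter_odd_val, Fintype.card_fin, Nat.add_sub_cancel]
    ring
  exact ⟨hcount, div_half_factorial_eq_of_two_mul_eq hn hcount⟩
end

section
/- For any natural numbers u < v < w, the quantity bit(u,w) equals exactly one of bit(u,v) or bit(v,w), and bit(u,v) ≠ bit(v,w). -/
/-!
Write `bit a b = log₂ (a ⊕ b)`. For `a < b`, `a` has a `0` and `b` a `1` at position `bit a b`.
So `v` has a `1` at `bit u v` and a `0` at `bit v w`, which are therefore distinct. Since
`u ⊕ w = (u ⊕ v) ⊕ (v ⊕ w)` and the two summands have different leading bits, the leading bit of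
`u ⊕ w` is the larger of the two.
-/

namespace Nat

theorem lt_two_pow_of_log2_lt {x k : ℕ} (h : x.log2 < k) : x < 2 ^ k := by
  rw [log2_eq_log_two] at h
  exact lt_pow_of_log_lt one_lt_two h

theorem log2_xor_of_log2_lt {x y : ℕ} (h : x.log2 < y.log2) : (x ^^^ y).log2 = y.log2 := by
  have hy : y ≠ 0 := by
    rintro rfl
    simp at h
  have htop : (x ^^^ y).testBit y.log2 = true := by
    rw [testBit_xor, testBit_lt_two_pow (lt_two_pow_of_log2_lt h), testBit_log2 hy]
    rfl
  have hbound : x ^^^ y < 2 ^ (y.log2 + 1) :=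
    xor_lt_two_pow (lt_two_pow_of_log2_lt (h.trans (lt_succ_self _))) lt_log2_self
  have hxy : x ^^^ y ≠ 0 := by
    rintro hzero
    simp [hzero] at htop
  exact (log2_eq_iff hxy).2 ⟨ge_two_pow_of_testBit htop, hbound⟩

theorem log2_xor_of_log2_ne {x y : ℕ} (h : x.log2 ≠ y.log2) :
    (x ^^^ y).log2 = max x.log2 y.log2 := by
  rcases h.lt_or_gt with hlt | hgt
  · rw [log2_xor_of_log2_lt hlt, max_eq_right hlt.le]
  · rw [Nat.xor_comm, log2_xor_of_log2_lt hgt, max_eq_left hgt.le]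

theorem testBit_log2_xor_of_lt {a b : ℕ} (hab : a < b) :
    a.testBit (a ^^^ b).log2 = false ∧ b.testBit (a ^^^ b).log2 = true := by
  set k := (a ^^^ b).log2
  have hne : a ^^^ b ≠ 0 := by
    simpa only [ne_eq, xor_eq_zero_iff] using hab.ne
  have hdiff : (a.testBit k ^^ b.testBit k) = true := by
    rw [← testBit_xor]
    exact testBit_log2 hne
  have hagree : ∀ j, k < j → a.testBit j = b.testBit j := by
    intro j hj
    have := testBit_lt_two_pow (lt_two_pow_of_log2_lt hj)
    rw [testBit_xor] at this
    simpa using this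
  cases ha : a.testBit k <;> cases hb : b.testBit k
  · simp [ha, hb] at hdiff
  · exact ⟨rfl, rfl⟩
  · exact absurd (lt_of_testBit k hb ha fun j hj => (hagree j hj).symm) hab.not_gt
  · simp [ha, hb] at hdiff

end Nat

/-- For `u < v < w`, writing `bit a b` for the index of the most significant
bit in which `a` and `b` differ, we have `bit u v ≠ bit v w`, and `bit u w`
equals exactly one of `bit u v` or `bit v w`. -/
theorem bit_trichotomy (u v w : ℕ) (huv : u < v) (hvw : v < w) :
    Nat.log2 (u ^^^ v) ≠ Nat.log2 (v ^^^ w) ∧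
    (Nat.log2 (u ^^^ w) = Nat.log2 (u ^^^ v) ∨
      Nat.log2 (u ^^^ w) = Nat.log2 (v ^^^ w)) := by
  have hv_one := (Nat.testBit_log2_xor_of_lt huv).2
  have hv_zero := (Nat.testBit_log2_xor_of_lt hvw).1
  have hne : Nat.log2 (u ^^^ v) ≠ Nat.log2 (v ^^^ w) := by
    intro h
    rw [h, hv_zero] at hv_one
    exact Bool.false_ne_true hv_one
  have hxor : u ^^^ w = (u ^^^ v) ^^^ (v ^^^ w) := by
    rw [Nat.xor_assoc, ← Nat.xor_assoc v, Nat.xor_self, Nat.zero_xor]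
  refine ⟨hne, ?_⟩
  rw [hxor, Nat.log2_xor_of_log2_ne hne]
  exact max_choice _ _
end

section
/- Let B ≥ 1 and k ≥ 2. Consider the Tenengolts code C of sequences (b_1,...,b_{k-1}) with entries in Z/B satisfying Σ b_i ≡ 0 (mod B) and Σ_{i : b_i < b_{i+1}} i ≡ 0 (mod k+1) (comparisons via representatives in {0,...,B-1}). Then C is a single-deletion-correcting code: no two distinct sequences in C become equal after deleting one element from each. -/
/-!
The first checksum recovers the deleted symbol, so `b j = c j'`. Deleting a symbol from a word
deletes exactly one bit from its ascent word (the indicator of `b i < b (i + 1)`), and the second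
checksum is the Varshamov–Tenengolts syndrome of the ascent word; since the binary VT code corrects
a single deletion, `b` and `c` have the same ascents. If `j ≤ j'`, then between the two positions
`c` is `b` with `b j` moved to position `j'`, so all comparisons in the cycle
`b j, b (j + 1), …, b j', b j` are of the same kind: they cannot all be strict ascents, hence they
are all `≥`, `b` is constant on `[j, j']`, and `b = c`.
-/

/-- Delete the entry at position `j` from a tuple of length `m`, yielding a
tuple of length `m - 1`. -/
def deleteAt {α : Type*} {m : ℕ} (b : Fin m → α) (j : Fin m) :
    Fin (m - 1) → α :=
  fun i =>
    if (i : ℕ) < (j : ℕ) then b ⟨i, by have := i.isLt; omega⟩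
    else b ⟨(i : ℕ) + 1, by have := i.isLt; omega⟩

/-- The Tenengolts code condition for a sequence `(b_1, ..., b_{k-1})` over
`ℤ/B`: the entries sum to `0 (mod B)`, and the sum of the (1-based) indices
`i` with `b_i < b_{i+1}` (comparing representatives in `{0,...,B-1}`) is
`0 (mod k+1)`. -/
def TenengoltsCode (B k : ℕ) (b : Fin (k - 1) → ZMod B) : Prop :=
  (∑ i, b i = 0) ∧
  (∑ i : Fin (k - 2),
      (if (b ⟨i, by have := i.isLt; omega⟩).val <
          (b ⟨(i : ℕ) + 1, by have := i.isLt; omega⟩).val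
        then ((i : ℕ) + 1 : ZMod (k + 1)) else 0)) = 0

open Finset

section Sequences

variable {α : Type*}

def eraseAt (v : ℕ → α) (p : ℕ) : ℕ → α := fun i => if i < p then v i else v (i + 1)

lemma eraseAt_of_lt {v : ℕ → α} {p i : ℕ} (h : i < p) : eraseAt v p i = v i := if_pos h

lemma eraseAt_of_le {v : ℕ → α} {p i : ℕ} (h : p ≤ i) : eraseAt v p i = v (i + 1) :=
  if_neg h.not_gt

lemma eraseAt_min (v : ℕ → α) {p n i : ℕ} (hi : i < n) :
    eraseAt v (min p n) i = eraseAt v p i := by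
  simp only [eraseAt]
  split_ifs <;> first | rfl | omega

lemma eqOn_of_eraseAt_eq_of_run {f f' : ℕ → α} {n q q' : ℕ} (hqq : q ≤ q') (hq' : q' ≤ n)
    (hdel : ∀ i < n, eraseAt f q i = eraseAt f' q' i)
    (hrun : ∀ i, q ≤ i → i ≤ q' → f i = f' q') :
    ∀ i ≤ n, f i = f' i := by
  intro i hi
  rcases lt_or_ge i q with hiq | hqi
  · simpa [eraseAt_of_lt hiq, eraseAt_of_lt (hiq.trans_le hqq)] using hdel i (by omega)
  rcases lt_trichotomy i q' with hiq' | rfl | hiq'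
  · rw [hrun i hqi hiq'.le, ← hrun (i + 1) (by omega) hiq', ← eraseAt_of_le (v := f) hqi,
      ← eraseAt_of_lt (v := f') hiq']
    exact hdel i (by omega)
  · exact hrun i hqi le_rfl
  · obtain ⟨t, rfl⟩ : ∃ t, i = t + 1 := ⟨i - 1, by omega⟩
    rw [← eraseAt_of_le (v := f) (by omega : q ≤ t),
      ← eraseAt_of_le (v := f') (by omega : q' ≤ t)]
    exact hdel t (by omega)

variable [LinearOrder α]

def ascents (v : ℕ → α) (i : ℕ) : ℕ := if v i < v (i + 1) then 1 else 0

lemma ascents_le_one (v : ℕ → α) (i : ℕ) : ascents v i ≤ 1 := by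
  unfold ascents; split <;> omega

lemma ite_lt_eq_or (a b c : α) :
    (if a < c then (1 : ℕ) else 0) = (if a < b then 1 else 0) ∨
      (if a < c then (1 : ℕ) else 0) = (if b < c then 1 else 0) := by
  split_ifs <;> simp_all only [not_lt, or_true, true_or] <;> order

lemma ascents_eraseAt (v : ℕ → α) (p : ℕ) :
    ∃ q, (q = p ∨ q + 1 = p) ∧ ascents (eraseAt v p) = eraseAt (ascents v) q := by
  have haway : ∀ q, (q = p ∨ q + 1 = p) → ∀ i, i + 1 ≠ p →
      ascents (eraseAt v p) i = eraseAt (ascents v) q i := by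
    intro q hq i hi
    rcases lt_or_ge (i + 1) p with h | h
    · rw [eraseAt_of_lt (by omega : i < q), ascents, ascents, eraseAt_of_lt (by omega),
        eraseAt_of_lt h]
    · rw [eraseAt_of_le (by omega : q ≤ i), ascents, ascents, eraseAt_of_le (by omega : p ≤ i),
        eraseAt_of_le (by omega)]
  rcases p with _ | m
  · exact ⟨0, .inl rfl, funext fun i => haway 0 (.inl rfl) i (by omega)⟩
  have hm : ascents (eraseAt v (m + 1)) m = if v m < v (m + 2) then 1 else 0 := by
    rw [ascents, eraseAt_of_lt (by omega), eraseAt_of_le le_rfl]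
  rcases ite_lt_eq_or (v m) (v (m + 1)) (v (m + 2)) with h | h
  · refine ⟨m + 1, .inl rfl, funext fun i => ?_⟩
    rcases eq_or_ne i m with rfl | hi
    · rw [hm, h, eraseAt_of_lt (by omega), ascents]
    · exact haway _ (.inl rfl) i (by omega)
  · refine ⟨m, .inr rfl, funext fun i => ?_⟩
    rcases eq_or_ne i m with rfl | hi
    · rw [hm, h, eraseAt_of_le le_rfl, ascents]
    · exact haway _ (.inr rfl) i (by omega)

def vtSyndrome (g : ℕ → ℕ) (m : ℕ) : ℕ := ∑ i ∈ range m, (i + 1) * g i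

lemma vtSyndrome_congr {g g' : ℕ → ℕ} {m : ℕ} (h : ∀ i < m, g i = g' i) :
    vtSyndrome g m = vtSyndrome g' m :=
  sum_congr rfl fun i hi => by rw [h i (mem_range.1 hi)]

lemma vtSyndrome_eq_eraseAt (g : ℕ → ℕ) {q n : ℕ} (hq : q ≤ n) :
    vtSyndrome g (n + 1) =
      vtSyndrome (eraseAt g q) n + (∑ i ∈ Ico q n, eraseAt g q i + (q + 1) * g q) := by
  induction n, hq using Nat.le_induction with
  | base =>
    rw [vtSyndrome, sum_range_succ, ← vtSyndrome, vtSyndrome_congr fun i hi => eraseAt_of_lt hi]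
    simp
  | succ n hqn ih =>
    simp only [vtSyndrome] at ih ⊢
    rw [sum_range_succ _ (n + 1), ih, sum_range_succ, sum_Ico_succ_top hqn, eraseAt_of_le hqn]
    ring

lemma sum_Ico_le_of_le_one {e : ℕ → ℕ} (he : ∀ i, e i ≤ 1) (q n : ℕ) :
    ∑ i ∈ Ico q n, e i ≤ n - q := by
  simpa using sum_le_sum fun i (_ : i ∈ Ico q n) => he i

lemma eq_and_eqOn_Ico_of_sum_add_mul_eq {e : ℕ → ℕ} {q q' u u' : ℕ} (he : ∀ i, e i ≤ 1)
    (hu : u ≤ 1) (hu' : u' ≤ 1)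
    (hqq : q ≤ q') (h : ∑ i ∈ Ico q q', e i + (q + 1) * u = (q' + 1) * u') :
    u = u' ∧ ∀ i ∈ Ico q q', e i = u := by
  have hle := sum_Ico_le_of_le_one he q q'
  interval_cases u <;> interval_cases u'
  · simp only [mul_zero, add_zero, sum_eq_zero_iff] at h
    exact ⟨rfl, h⟩
  · omega
  · omega
  · refine ⟨rfl, fun i hi => le_antisymm (he i) (not_lt.1 fun hlt => ?_)⟩
    have := sum_lt_sum (fun i (_ : i ∈ Ico q q') => he i) ⟨i, hi, hlt⟩
    simp only [sum_const, Nat.card_Ico, smul_eq_mul, mul_one] at this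
    omega

theorem eqOn_of_eraseAt_eq_of_vtSyndrome_modEq {g g' : ℕ → ℕ} {n q q' M : ℕ}
    (hg : ∀ i, g i ≤ 1) (hg' : ∀ i, g' i ≤ 1) (hq : q ≤ n) (hq' : q' ≤ n) (hM : n + 2 ≤ M)
    (hdel : ∀ i < n, eraseAt g q i = eraseAt g' q' i)
    (hsyn : vtSyndrome g (n + 1) ≡ vtSyndrome g' (n + 1) [MOD M]) :
    ∀ i ≤ n, g i = g' i := by
  wlog hqq : q ≤ q' generalizing g g' q q'
  · exact fun i hi => (this hg' hg hq' hq (fun i hi => (hdel i hi).symm) hsyn.symm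
      (by omega) i hi).symm
  rw [vtSyndrome_eq_eraseAt g hq, vtSyndrome_eq_eraseAt g' hq'] at hsyn
  set e := eraseAt g q
  have he : ∀ i, e i ≤ 1 := fun i => by simp only [e, eraseAt]; split <;> apply hg
  have htail' : ∑ i ∈ Ico q' n, e i = ∑ i ∈ Ico q' n, eraseAt g' q' i :=
    sum_congr rfl fun i hi => hdel i (mem_Ico.1 hi).2
  rw [← vtSyndrome_congr hdel, ← htail'] at hsyn
  -- both tails are at most `n + 1 < M`
  have htail :
      ∑ i ∈ Ico q n, e i + (q + 1) * g q = ∑ i ∈ Ico q' n, e i + (q' + 1) * g' q' := by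
    have := sum_Ico_le_of_le_one he q n
    have := sum_Ico_le_of_le_one he q' n
    have := Nat.mul_le_mul_left (q + 1) (hg q)
    have := Nat.mul_le_mul_left (q' + 1) (hg' q')
    exact (Nat.ModEq.add_left_cancel' _ hsyn).eq_of_lt_of_lt (by omega) (by omega)
  rw [← sum_Ico_consecutive e hqq hq'] at htail
  obtain ⟨hgq, hrun⟩ := eq_and_eqOn_Ico_of_sum_add_mul_eq he (hg q) (hg' q') hqq (by omega)
  refine eqOn_of_eraseAt_eq_of_run hqq hq' hdel fun i hqi hiq' => ?_
  rcases hqi.eq_or_lt with rfl | hlt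
  · exact hgq
  obtain ⟨t, rfl⟩ : ∃ t, i = t + 1 := ⟨i - 1, by omega⟩
  rw [← hgq, ← hrun t (mem_Ico.2 ⟨by omega, by omega⟩)]
  exact (eraseAt_of_le (by omega)).symm

lemma ascents_eq_ascents_iff {v w : ℕ → α} {i k : ℕ} :
    ascents v i = ascents w k ↔ (v i < v (i + 1) ↔ w k < w (k + 1)) := by
  by_cases hv : v i < v (i + 1) <;> by_cases hw : w k < w (k + 1) <;> simp [ascents, hv, hw]

lemma eq_of_ascents_eq_of_shift {b c : ℕ → α} {j j' : ℕ} (hjj : j ≤ j')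
    (hshift : ∀ i, j ≤ i → i < j' → c i = b (i + 1)) (hval : b j = c j')
    (hasc : ∀ i, j ≤ i → i < j' → ascents b i = ascents c i) :
    ∀ i, j ≤ i → i ≤ j' → b i = c j' := by
  rcases hjj.eq_or_lt with rfl | hlt
  · intro i h1 h2
    rwa [le_antisymm h2 h1]
  have hconst : ∀ i, j ≤ i → i < j' → ascents b i = ascents b j := by
    intro i hji hij'
    induction i, hji using Nat.le_induction with
    | base => rfl
    | succ i hji ih =>
      rw [← ih (by omega), hasc i hji (by omega), ascents, ascents, hshift i hji (by omega),
        hshift (i + 1) (by omega) hij']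
  have hstep : ∀ i, j ≤ i → i < j' → (b i < b (i + 1) ↔ b j < b (j + 1)) :=
    fun i hji hij' => ascents_eq_ascents_iff.1 (hconst i hji hij')
  have hwrap : b j' < b j ↔ b j < b (j + 1) := by
    have h := ascents_eq_ascents_iff.1
      ((hasc (j' - 1) (by omega) (by omega)).symm.trans (hconst (j' - 1) (by omega) (by omega)))
    rwa [hshift _ (by omega) (by omega), Nat.sub_add_cancel (by omega), ← hval] at h
  by_cases hup : b j < b (j + 1)
  · have hmono : StrictMonoOn b (Set.Icc j j') :=
      strictMonoOn_of_lt_succ Set.ordConnected_Icc fun i _ hi hi' => by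
        rw [Order.succ_eq_add_one] at hi' ⊢
        exact (hstep i hi.1 (by have := hi'.2; omega)).2 hup
    exact absurd (hmono ⟨le_rfl, hjj⟩ ⟨hjj, le_rfl⟩ hlt) (not_lt.2 (hwrap.2 hup).le)
  · have hanti : AntitoneOn b (Set.Icc j j') :=
      antitoneOn_of_succ_le Set.ordConnected_Icc fun i _ hi hi' => by
        rw [Order.succ_eq_add_one] at hi' ⊢
        exact not_lt.1 fun h => hup ((hstep i hi.1 (by have := hi'.2; omega)).1 h)
    intro i hji hij'
    rw [← hval]
    exact le_antisymm (hanti ⟨le_rfl, hjj⟩ ⟨hji, hij'⟩ hji)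
      ((not_lt.1 (hup ∘ hwrap.1)).trans (hanti ⟨hji, hij'⟩ ⟨hjj, le_rfl⟩ hij'))

theorem eqOn_of_eraseAt_eq_of_vtSyndrome_ascents_modEq {b c : ℕ → α} {n j j' M : ℕ}
    (hj : j ≤ n) (hj' : j' ≤ n) (hM : n < M) (hdel : ∀ i < n, eraseAt b j i = eraseAt c j' i)
    (hval : b j = c j') (hsyn : vtSyndrome (ascents b) n ≡ vtSyndrome (ascents c) n [MOD M]) :
    ∀ i ≤ n, b i = c i := by
  wlog hjj : j ≤ j' generalizing b c j j'
  · exact fun i hi => (this hj' hj (fun i hi => (hdel i hi).symm) hval.symm hsyn.symm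
      (by omega) i hi).symm
  have hasc : ∀ i < n, ascents b i = ascents c i := by
    rcases n with _ | n
    · simp
    obtain ⟨q, -, hbq⟩ := ascents_eraseAt b j
    obtain ⟨q', -, hcq⟩ := ascents_eraseAt c j'
    have hdel' : ∀ i < n, eraseAt (ascents b) (min q n) i = eraseAt (ascents c) (min q' n) i := by
      intro i hi
      rw [eraseAt_min _ hi, eraseAt_min _ hi, ← hbq, ← hcq, ascents, ascents, hdel i (by omega),
        hdel (i + 1) (by omega)]
    exact fun i hi => eqOn_of_eraseAt_eq_of_vtSyndrome_modEq (ascents_le_one b) (ascents_le_one c)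
      (min_le_right _ _) (min_le_right _ _) (by omega) hdel' hsyn i (by omega)
  refine eqOn_of_eraseAt_eq_of_run hjj hj' hdel (eq_of_ascents_eq_of_shift hjj ?_ hval ?_)
  · intro i hji hij'
    have := hdel i (by omega)
    rwa [eraseAt_of_le hji, eraseAt_of_lt hij', eq_comm] at this
  · exact fun i _ hij' => hasc i (by omega)

end Sequences

def valSeq {B m : ℕ} (b : Fin m → ZMod B) (i : ℕ) : ℕ :=
  if h : i < m then (b ⟨i, h⟩).val else 0

lemma valSeq_of_lt {B m : ℕ} (b : Fin m → ZMod B) {i : ℕ} (h : i < m) :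
    valSeq b i = (b ⟨i, h⟩).val :=
  dif_pos h

lemma valSeq_deleteAt {B m : ℕ} (b : Fin m → ZMod B) (j : Fin m) {i : ℕ} (hi : i < m - 1) :
    valSeq (deleteAt b j) i = eraseAt (valSeq b) j i := by
  rw [valSeq_of_lt _ hi, deleteAt, eraseAt]
  split_ifs <;> rw [valSeq_of_lt]

lemma sum_eq_add_sum_deleteAt {M : Type*} [AddCommMonoid M] {m : ℕ} (b : Fin m → M)
    (j : Fin m) :
    ∑ i, b i = b j + ∑ i, deleteAt b j i := by
  obtain ⟨m, rfl⟩ : ∃ m', m = m' + 1 := ⟨m - 1, by have := j.isLt; omega⟩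
  rw [Fin.sum_univ_succAbove b j]
  congr 1
  refine Fintype.sum_congr _ _ fun i => ?_
  by_cases h : (i : ℕ) < j
  · rw [Fin.succAbove_of_castSucc_lt _ _ h]
    exact (if_pos h).symm
  · rw [Fin.succAbove_of_le_castSucc _ _ (not_lt.1 h)]
    exact (if_neg h).symm

lemma tenengoltsCode_iff {B k : ℕ} (b : Fin (k - 1) → ZMod B) :
    TenengoltsCode B k b ↔
      ∑ i, b i = 0 ∧ (vtSyndrome (ascents (valSeq b)) (k - 2) : ZMod (k + 1)) = 0 := by
  refine and_congr_right fun _ => Eq.congr_left ?_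
  rw [vtSyndrome, Nat.cast_sum, ← Fin.sum_univ_eq_sum_range]
  refine Fintype.sum_congr _ _ fun i => ?_
  rw [ascents, valSeq_of_lt _ (by omega), valSeq_of_lt _ (by omega)]
  split_ifs <;> simp

theorem tenengolts_single_deletion_general (B k : ℕ) (hB : 1 ≤ B)
    (b c : Fin (k - 1) → ZMod B)
    (hb : TenengoltsCode B k b) (hc : TenengoltsCode B k c) (hbc : b ≠ c)
    (j j' : Fin (k - 1)) :
    deleteAt b j ≠ deleteAt c j' := by
  have : NeZero B := ⟨by omega⟩
  rw [tenengoltsCode_iff] at hb hc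
  intro hdel
  have hval : b j = c j' := by
    have := sum_eq_add_sum_deleteAt b j
    rwa [hb.1, hdel, ← hc.1, sum_eq_add_sum_deleteAt c j', add_left_inj, eq_comm] at this
  have hsyn := (ZMod.natCast_eq_natCast_iff _ _ _).1 (hb.2.trans hc.2.symm)
  have hseq := eqOn_of_eraseAt_eq_of_vtSyndrome_ascents_modEq (n := k - 2) (j := j) (j' := j')
    (by omega) (by omega) (by omega)
    (fun i hi => by rw [← valSeq_deleteAt b j (by omega), hdel, valSeq_deleteAt c j' (by omega)])
    (by rw [valSeq_of_lt _ j.isLt, valSeq_of_lt _ j'.isLt, hval]) hsyn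
  refine hbc (funext fun i => ZMod.val_injective B ?_)
  rw [← valSeq_of_lt b i.isLt, ← valSeq_of_lt c i.isLt]
  exact hseq i (by omega)

/-- The Tenengolts code is single-deletion-correcting: two distinct codewords
can never become equal after deleting one element from each. -/
theorem tenengolts_single_deletion (B k : ℕ) (hB : 1 ≤ B) (hk : 2 ≤ k)
    (b c : Fin (k - 1) → ZMod B)
    (hb : TenengoltsCode B k b) (hc : TenengoltsCode B k c) (hbc : b ≠ c)
    (j j' : Fin (k - 1)) :
    deleteAt b j ≠ deleteAt c j' :=
  tenengolts_single_deletion_general B k hB b c hb hc hbc j j'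
end
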